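/- Let L : ℝ^{N+1} → ℝ be smooth (not depending explicitly on t), φ : ℝ → ℝ a smooth solution of the N-th order Euler–Lagrange equation Σ_{k=0}^{N} (−1)^k (d^k/dt^k)[(∂L/∂y_k)(φ, …, φ^{(N)})] = 0, and define the energy τ(t) = Σ_{j=0}^{N−1} B_j(t) · φ^{(j+1)}(t) − L(φ(t), …, φ^{(N)}(t)), where B_j(t) = Σ_{k=j+1}^{N} (−1)^{k−j−1} (d^{k−j−1}/dt^{k−j−1})[(∂L/∂y_k)(φ, …, φ^{(N)})]. Then τ'(t) = 0 for all t, i.e., τ is constant. -/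

import Mathlib

open Finset
open scoped ContDiff

/-- The `N`-jet of a curve `φ`. -/
noncomputable def jet (N : ℕ) (φ : ℝ → ℝ) (t : ℝ) : Fin (N + 1) → ℝ :=
  fun k => iteratedDeriv k.1 φ t

open Fin.NatCast in
/-- `∂L/∂y_k` evaluated along the `N`-jet of `φ`. -/
noncomputable def lagDeriv (N : ℕ) (L : (Fin (N + 1) → ℝ) → ℝ) (φ : ℝ → ℝ)
    (k : ℕ) (t : ℝ) : ℝ :=
  fderiv ℝ L (jet N φ t) (Pi.single (k : Fin (N + 1)) 1)

/-- `B_j = Σ_{k=j+1}^{N} (−1)^{k−j−1} d^{k−j−1}[∂L/∂y_k]` (with `k = j + 1 + m`). -/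
noncomputable def boundaryMomentum (N : ℕ) (L : (Fin (N + 1) → ℝ) → ℝ)
    (φ : ℝ → ℝ) (j : ℕ) (t : ℝ) : ℝ :=
  ∑ m ∈ Finset.range (N - j),
    (-1 : ℝ) ^ m * iteratedDeriv m (lagDeriv N L φ (j + 1 + m)) t

/-- The `N`-th order Euler–Lagrange expression along `φ`. -/
noncomputable def eulerLagrange (N : ℕ) (L : (Fin (N + 1) → ℝ) → ℝ)
    (φ : ℝ → ℝ) (t : ℝ) : ℝ :=
  ∑ k ∈ Finset.range (N + 1), (-1 : ℝ) ^ k * iteratedDeriv k (lagDeriv N L φ k) t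

/-- The generalized (Ostrogradsky) energy `τ = Σ_j B_j φ^{(j+1)} − L(φ, …, φ^{(N)})`. -/
noncomputable def ostroEnergy (N : ℕ) (L : (Fin (N + 1) → ℝ) → ℝ)
    (φ : ℝ → ℝ) (t : ℝ) : ℝ :=
  (∑ j ∈ Finset.range N, boundaryMomentum N L φ j t * iteratedDeriv (j + 1) φ t) -
    L (jet N φ t)

/-- telescoping helper: `Haux (j+1) = B_j φ^{(j+2)}`, `Haux 0 = 0`. -/
noncomputable def Haux (N : ℕ) (L : (Fin (N + 1) → ℝ) → ℝ) (φ : ℝ → ℝ) (t : ℝ) :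
    ℕ → ℝ
  | 0 => 0
  | j + 1 => boundaryMomentum N L φ j t * iteratedDeriv (j + 2) φ t

@[simp] lemma Haux_zero (N : ℕ) (L : (Fin (N + 1) → ℝ) → ℝ) (φ : ℝ → ℝ) (t : ℝ) :
    Haux N L φ t 0 = 0 := rfl

@[simp] lemma Haux_succ (N : ℕ) (L : (Fin (N + 1) → ℝ) → ℝ) (φ : ℝ → ℝ) (t : ℝ)
    (j : ℕ) : Haux N L φ t (j + 1) = boundaryMomentum N L φ j t * iteratedDeriv (j + 2) φ t :=
  rfl

section Aux

variable {N : ℕ} {L : (Fin (N + 1) → ℝ) → ℝ} {φ : ℝ → ℝ}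

lemma contDiff_inf_iteratedDeriv (hφ : ContDiff ℝ ∞ φ) (n : ℕ) :
    ContDiff ℝ ∞ (iteratedDeriv n φ) := by
  rw [iteratedDeriv_eq_iterate]; exact hφ.iterate_deriv n

lemma hasDerivAt_iteratedDeriv (hφ : ContDiff ℝ ∞ φ) (n : ℕ) (t : ℝ) :
    HasDerivAt (iteratedDeriv n φ) (iteratedDeriv (n + 1) φ t) t := by
  rw [iteratedDeriv_succ]
  exact (((contDiff_inf_iteratedDeriv hφ n).differentiable
    (by norm_num)).differentiableAt).hasDerivAt

lemma jet_contDiff (hφ : ContDiff ℝ ∞ φ) : ContDiff ℝ ∞ (jet N φ) :=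
  contDiff_pi.2 fun k => contDiff_inf_iteratedDeriv hφ k.1

lemma lagDeriv_contDiff (hL : ContDiff ℝ (⊤ : ℕ∞) L) (hφ : ContDiff ℝ ∞ φ) (k : ℕ) :
    ContDiff ℝ ∞ (lagDeriv N L φ k) := by
  have h1 : ContDiff ℝ ∞ (fderiv ℝ L) := hL.fderiv_right (by exact (by simp))
  exact (h1.comp (jet_contDiff hφ)).clm_apply contDiff_const

lemma hasDerivAt_jet (hφ : ContDiff ℝ ∞ φ) (t : ℝ) :
    HasDerivAt (jet N φ) (fun k : Fin (N + 1) => iteratedDeriv (k.1 + 1) φ t) t := by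
  rw [hasDerivAt_pi]
  exact fun k => hasDerivAt_iteratedDeriv hφ k.1 t

/-- chain rule for `L ∘ jet`. -/
lemma hasDerivAt_L_jet (hL : ContDiff ℝ (⊤ : ℕ∞) L) (hφ : ContDiff ℝ ∞ φ) (t : ℝ) :
    HasDerivAt (fun t => L (jet N φ t))
      (∑ k ∈ Finset.range (N + 1), lagDeriv N L φ k t * iteratedDeriv (k + 1) φ t) t := by
  have hfd : HasFDerivAt L (fderiv ℝ L (jet N φ t)) (jet N φ t) :=
    (hL.differentiable (by simp) (jet N φ t)).hasFDerivAt
  have h := hfd.comp_hasDerivAt t (hasDerivAt_jet hφ t)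
  have hval : fderiv ℝ L (jet N φ t) (fun k : Fin (N + 1) => iteratedDeriv (k.1 + 1) φ t)
      = ∑ k ∈ Finset.range (N + 1), lagDeriv N L φ k t * iteratedDeriv (k + 1) φ t := by
    set f := fderiv ℝ L (jet N φ t) with hf
    set v : Fin (N + 1) → ℝ := fun k => iteratedDeriv (k.1 + 1) φ t with hv
    have hv' : v = ∑ k : Fin (N + 1), v k • (Pi.single k 1 : Fin (N + 1) → ℝ) := by
      conv_lhs => rw [← Finset.univ_sum_single v]
      refine Finset.sum_congr rfl fun k _ => ?_
      rw [← Pi.single_smul, smul_eq_mul, mul_one]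
    calc f v = f (∑ k : Fin (N + 1), v k • (Pi.single k 1 : Fin (N + 1) → ℝ)) := by
          rw [← hv']
      _ = ∑ k : Fin (N + 1), v k * f (Pi.single k 1) := by
          rw [map_sum]
          refine Finset.sum_congr rfl fun k _ => ?_
          rw [f.map_smul, smul_eq_mul]
      _ = ∑ k : Fin (N + 1), lagDeriv N L φ (k : ℕ) t * iteratedDeriv ((k : ℕ) + 1) φ t := by
          refine Finset.sum_congr rfl fun k _ => ?_
          rw [mul_comm]
          unfold lagDeriv
          rw [← hf, Fin.cast_val_eq_self]
      _ = ∑ k ∈ Finset.range (N + 1), lagDeriv N L φ k t * iteratedDeriv (k + 1) φ t :=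
          Fin.sum_univ_eq_sum_range (fun k => lagDeriv N L φ k t * iteratedDeriv (k + 1) φ t)
            (N + 1)
  rw [hval] at h
  exact h

lemma hasDerivAt_boundaryMomentum (hL : ContDiff ℝ (⊤ : ℕ∞) L) (hφ : ContDiff ℝ ∞ φ)
    (j : ℕ) (t : ℝ) :
    HasDerivAt (boundaryMomentum N L φ j)
      (∑ m ∈ Finset.range (N - j),
        (-1 : ℝ) ^ m * iteratedDeriv (m + 1) (lagDeriv N L φ (j + 1 + m)) t) t := by
  unfold boundaryMomentum
  exact HasDerivAt.fun_sum fun m _ =>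
    (hasDerivAt_iteratedDeriv (lagDeriv_contDiff hL hφ _) m t).const_mul ((-1 : ℝ) ^ m)

/-- Recurrence `B_j = A_{j+1} - (B_{j+1})'` for `j < N`. -/
lemma boundaryMomentum_rec (hL : ContDiff ℝ (⊤ : ℕ∞) L) (hφ : ContDiff ℝ ∞ φ)
    {j : ℕ} (hj : j < N) (t : ℝ) :
    boundaryMomentum N L φ j t
      = lagDeriv N L φ (j + 1) t - deriv (boundaryMomentum N L φ (j + 1)) t := by
  rw [(hasDerivAt_boundaryMomentum hL hφ (j + 1) t).deriv]
  unfold boundaryMomentum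
  obtain ⟨d, hd⟩ : ∃ d, N - j = d + 1 := ⟨N - j - 1, by omega⟩
  have hd' : N - (j + 1) = d := by omega
  rw [hd, hd', Finset.sum_range_succ']
  have hc : ∀ m ∈ Finset.range d,
      (-1 : ℝ) ^ (m + 1) * iteratedDeriv (m + 1) (lagDeriv N L φ (j + 1 + (m + 1))) t
      = -((-1 : ℝ) ^ m * iteratedDeriv (m + 1) (lagDeriv N L φ (j + 1 + 1 + m)) t) := by
    intro m _
    rw [show j + 1 + (m + 1) = j + 1 + 1 + m by ring, pow_succ]
    ring
  rw [Finset.sum_congr rfl hc, Finset.sum_neg_distrib]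
  simp only [pow_zero, one_mul, iteratedDeriv_zero, Nat.add_zero]
  ring

lemma eulerLagrange_eq (hL : ContDiff ℝ (⊤ : ℕ∞) L) (hφ : ContDiff ℝ ∞ φ) (t : ℝ) :
    eulerLagrange N L φ t = lagDeriv N L φ 0 t - deriv (boundaryMomentum N L φ 0) t := by
  rw [(hasDerivAt_boundaryMomentum hL hφ 0 t).deriv]
  unfold eulerLagrange
  rw [Finset.sum_range_succ']
  have hc : ∀ m ∈ Finset.range N,
      (-1 : ℝ) ^ (m + 1) * iteratedDeriv (m + 1) (lagDeriv N L φ (m + 1)) t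
      = -((-1 : ℝ) ^ m * iteratedDeriv (m + 1) (lagDeriv N L φ (0 + 1 + m)) t) := by
    intro m _
    rw [show (0 : ℕ) + 1 + m = m + 1 by ring, pow_succ]
    ring
  rw [Finset.sum_congr rfl hc, Finset.sum_neg_distrib]
  simp only [pow_zero, one_mul, iteratedDeriv_zero, Nat.sub_zero]
  ring

/-- the top boundary momentum equals the top Lagrangian derivative
(using the Euler–Lagrange equation in the degenerate case `N = 0`). -/
lemma Haux_top : ∀ (N : ℕ) (L : (Fin (N + 1) → ℝ) → ℝ), ContDiff ℝ (⊤ : ℕ∞) L →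
    ∀ (φ : ℝ → ℝ), ContDiff ℝ ∞ φ → ∀ t : ℝ, eulerLagrange N L φ t = 0 →
    Haux N L φ t N = lagDeriv N L φ N t * iteratedDeriv (N + 1) φ t
  | 0, L, _, φ, _, t, hEL => by
    have h0 : lagDeriv 0 L φ 0 t = 0 := by
      unfold eulerLagrange at hEL
      simpa using hEL
    simp [h0]
  | M + 1, L, hL, φ, hφ, t, _ => by
    rw [Haux_succ]
    have hz : boundaryMomentum (M + 1) L φ (M + 1) = fun _ => 0 := by
      funext s
      unfold boundaryMomentum
      simp
    have := boundaryMomentum_rec hL hφ (N := M + 1) (L := L) (j := M) (by omega) t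
    rw [hz] at this
    have h' : boundaryMomentum (M + 1) L φ M t = lagDeriv (M + 1) L φ (M + 1) t := by
      simpa using this
    rw [h']

end Aux

theorem higher_order_energy_conservation (N : ℕ)
    (L : (Fin (N + 1) → ℝ) → ℝ) (hL : ContDiff ℝ (⊤ : ℕ∞) L)
    (φ : ℝ → ℝ) (hφ : ContDiff ℝ (⊤ : ℕ∞) φ)
    (hEL : ∀ t : ℝ, eulerLagrange N L φ t = 0) :
    ∀ t : ℝ, deriv (ostroEnergy N L φ) t = 0 := by
  intro t
  have hφ' : ContDiff ℝ ∞ φ := hφ.of_le (by simp)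
  have hsum : HasDerivAt (fun t => ∑ j ∈ Finset.range N,
      boundaryMomentum N L φ j t * iteratedDeriv (j + 1) φ t)
      (∑ j ∈ Finset.range N,
        (deriv (boundaryMomentum N L φ j) t * iteratedDeriv (j + 1) φ t
          + boundaryMomentum N L φ j t * iteratedDeriv (j + 2) φ t)) t := by
    apply HasDerivAt.fun_sum
    intro j _
    have h1 := hasDerivAt_boundaryMomentum hL hφ' j t
    have h2 : HasDerivAt (iteratedDeriv (j + 1) φ) (iteratedDeriv (j + 2) φ t) t :=
      hasDerivAt_iteratedDeriv hφ' (j + 1) t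
    rw [h1.deriv]
    exact h1.mul h2
  have hτ : HasDerivAt (ostroEnergy N L φ)
      ((∑ j ∈ Finset.range N,
        (deriv (boundaryMomentum N L φ j) t * iteratedDeriv (j + 1) φ t
          + boundaryMomentum N L φ j t * iteratedDeriv (j + 2) φ t))
        - ∑ k ∈ Finset.range (N + 1), lagDeriv N L φ k t * iteratedDeriv (k + 1) φ t) t :=
    hsum.sub (hasDerivAt_L_jet hL hφ' t)
  rw [hτ.deriv]
  have key : ∀ j ∈ Finset.range N,
      deriv (boundaryMomentum N L φ j) t * iteratedDeriv (j + 1) φ t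
        + boundaryMomentum N L φ j t * iteratedDeriv (j + 2) φ t
      = lagDeriv N L φ j t * iteratedDeriv (j + 1) φ t
          + (Haux N L φ t (j + 1) - Haux N L φ t j) := by
    intro j hj
    rw [Finset.mem_range] at hj
    match j, hj with
    | 0, hj =>
      have h0 : deriv (boundaryMomentum N L φ 0) t = lagDeriv N L φ 0 t := by
        have h := eulerLagrange_eq hL hφ' (N := N) (L := L) t
        rw [hEL t] at h
        linarith
      rw [h0, Haux_succ, Haux_zero]
      ring
    | j + 1, hj =>
      have hrec := boundaryMomentum_rec hL hφ' (N := N) (L := L) (j := j) (by omega) t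
      rw [show deriv (boundaryMomentum N L φ (j + 1)) t
          = lagDeriv N L φ (j + 1) t - boundaryMomentum N L φ j t by linarith]
      rw [Haux_succ, Haux_succ]
      ring_nf
  rw [Finset.sum_congr rfl key, Finset.sum_add_distrib, Finset.sum_range_sub,
    Haux_top N L hL φ hφ' t (hEL t), Finset.sum_range_succ]
  simp
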